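/- Let (X, ℰ) be a strictly locally ordered space with a chosen strict ordered basis 𝔅 ∈ ℰ. Then (X, ℰ) is a locally Nachbin ordered space if, and only if, for every x ∈ X there is B ∈ 𝔅 containing x such that B (with the topology inherited from X) is a Nachbin ordered space. -/

import Mathlib

universe u v w v'

/-! ## Ordered bases and locally ordered spaces -/

/-- An *ordered subset* of `X`: a pair of a carrier set and a relation on `X`
(intended to be a partial order on the carrier). -/
structure OSet (X : Type u) : Type u where
  carrier : Set X
  le : X → X → Prop

namespace OSet

variable {X : Type u} {Y : Type v}

/-- `B` is a partially ordered subset: the relation only relates elements of the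
carrier, is reflexive on the carrier, antisymmetric and transitive. -/
def IsPoset (B : OSet X) : Prop :=
  (∀ p q, B.le p q → p ∈ B.carrier ∧ q ∈ B.carrier) ∧
  (∀ p ∈ B.carrier, B.le p p) ∧
  (∀ p q, B.le p q → B.le q p → p = q) ∧
  (∀ p q r, B.le p q → B.le q r → B.le p r)

/-- `B ⊆_lax B'`. -/
def laxSub (B B' : OSet X) : Prop :=
  B.carrier ⊆ B'.carrier ∧ ∀ p q, B.le p q → B'.le p q

/-- `B ⊆_str B'` : the carrier is included and `≤_B` is the restriction of `≤_{B'}`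
to the carrier of `B`. -/
def strSub (B B' : OSet X) : Prop :=
  B.carrier ⊆ B'.carrier ∧ ∀ p ∈ B.carrier, ∀ q ∈ B.carrier, (B.le p q ↔ B'.le p q)

/-- Product of two ordered subsets, with the product order. -/
def prod (B : OSet X) (B' : OSet Y) : OSet (X × Y) where
  carrier := B.carrier ×ˢ B'.carrier
  le p q := B.le p.1 q.1 ∧ B'.le p.2 q.2

/-- The restriction of an ordered subset to a subset `S` (of its carrier). -/
def restrict (B : OSet X) (S : Set X) : OSet X where
  carrier := S
  le p q := B.le p q ∧ p ∈ S ∧ q ∈ S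

/-- `B` is a Nachbin ordered (sub)space: its order is closed in the product of the
subspace `B.carrier` (with the topology inherited from `X`) with itself. -/
def IsNachbin [TopologicalSpace X] (B : OSet X) : Prop :=
  IsClosed {p : B.carrier × B.carrier | B.le p.1 p.2}

end OSet

/-- `𝔅` is an *ordered basis* on the topological space `X`. -/
structure IsOrderedBasis {X : Type u} [TopologicalSpace X] (𝔅 : Set (OSet X)) : Prop where
  isPoset : ∀ B ∈ 𝔅, B.IsPoset
  isBasis : TopologicalSpace.IsTopologicalBasis (OSet.carrier '' 𝔅)
  compat : ∀ x : X, ∀ B ∈ 𝔅, ∀ B' ∈ 𝔅, x ∈ B.carrier → x ∈ B'.carrier →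
    ∃ B'' ∈ 𝔅, x ∈ B''.carrier ∧ B''.carrier ⊆ B.carrier ∩ B'.carrier ∧
      ∀ p q, B''.le p q → B.le p q ∧ B'.le p q

/-- `𝔅` is a *strict* ordered basis: the interpolating element `B''` can be chosen
with `B'' ⊆_str B` and `B'' ⊆_str B'`. -/
def IsStrictOrderedBasis {X : Type u} [TopologicalSpace X] (𝔅 : Set (OSet X)) : Prop :=
  IsOrderedBasis 𝔅 ∧
    ∀ x : X, ∀ B ∈ 𝔅, ∀ B' ∈ 𝔅, x ∈ B.carrier → x ∈ B'.carrier →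
      ∃ B'' ∈ 𝔅, x ∈ B''.carrier ∧ B''.strSub B ∧ B''.strSub B'

/-- `𝔅'` is coarser than `𝔅`. -/
def CoarserThan {X : Type u} (𝔅' 𝔅 : Set (OSet X)) : Prop :=
  ∀ x : X, ∀ B' ∈ 𝔅', x ∈ B'.carrier → ∃ B ∈ 𝔅, x ∈ B.carrier ∧ B.laxSub B'

/-- `𝔅'` is strictly coarser than `𝔅` (`⊆_lax` replaced by `⊆_str`). -/
def StrictCoarserThan {X : Type u} (𝔅' 𝔅 : Set (OSet X)) : Prop :=
  ∀ x : X, ∀ B' ∈ 𝔅', x ∈ B'.carrier → ∃ B ∈ 𝔅, x ∈ B.carrier ∧ B.strSub B'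

/-- Two ordered bases are equivalent when each is coarser than the other. -/
def EquivBases {X : Type u} (𝔅 𝔅' : Set (OSet X)) : Prop :=
  CoarserThan 𝔅' 𝔅 ∧ CoarserThan 𝔅 𝔅'

/-- Strict equivalence of ordered bases. -/
def StrictEquivBases {X : Type u} (𝔅 𝔅' : Set (OSet X)) : Prop :=
  StrictCoarserThan 𝔅' 𝔅 ∧ StrictCoarserThan 𝔅 𝔅'

/-- The *open posets* `Ō(𝔅)` determined by an ordered basis `𝔅`. -/
def openPosets {X : Type u} (𝔅 : Set (OSet X)) : Set (OSet X) :=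
  {A | ∀ x ∈ A.carrier, ∃ B ∈ 𝔅, x ∈ B.carrier ∧ B.laxSub A}

/-- `f` is locally increasing at `x`, w.r.t. the ordered bases `𝔅` (source) and
`𝔅'` (target). -/
def LocIncrAt {X : Type u} {Y : Type v} (𝔅 : Set (OSet X)) (𝔅' : Set (OSet Y))
    (f : X → Y) (x : X) : Prop :=
  ∀ B' ∈ 𝔅', f x ∈ B'.carrier →
    ∃ B ∈ 𝔅, x ∈ B.carrier ∧ (∀ p ∈ B.carrier, f p ∈ B'.carrier) ∧
      ∀ p q, B.le p q → B'.le (f p) (f q)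

/-- `f` is locally increasing. -/
def LocIncr {X : Type u} {Y : Type v} (𝔅 : Set (OSet X)) (𝔅' : Set (OSet Y))
    (f : X → Y) : Prop :=
  ∀ x : X, LocIncrAt 𝔅 𝔅' f x

/-- The locally ordered space given by the basis `𝔅` is locally Nachbin. -/
def IsLocallyNachbin {X : Type u} [TopologicalSpace X] (𝔅 : Set (OSet X)) : Prop :=
  ∀ x : X, ∀ O ∈ openPosets 𝔅, x ∈ O.carrier →
    ∃ O' ∈ openPosets 𝔅, x ∈ O'.carrier ∧ O'.laxSub O ∧ O'.IsNachbin

/-- The product ordered basis on `X × Y`. -/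
def prodBasis {X : Type u} {Y : Type v} (𝔅 : Set (OSet X)) (𝔅' : Set (OSet Y)) :
    Set (OSet (X × Y)) :=
  {C | ∃ B ∈ 𝔅, ∃ B' ∈ 𝔅', C = B.prod B'}

/-- A topological space viewed as a locally ordered space: all its open subsets,
each ordered by equality. -/
def trivBasis (T : Type v) [TopologicalSpace T] : Set (OSet T) :=
  {B | ∃ U : Set T, IsOpen U ∧ B = ⟨U, fun p q => p = q ∧ p ∈ U⟩}

/-
A strict sub-ordered-set of a Nachbin ordered set is Nachbin: its order is the preimage of the
closed order under the continuous inclusion of carriers. In a strict basis any two elements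
around `x` have a common element `B''` which is lax in one and strict in the other. Forward: a
Nachbin open poset `O'` around `x` inside some `B ∈ 𝔅` contains some `B₀ ∈ 𝔅`; interpolating
`B₀` and `B` gives `B'' ⊆_lax B₀ ⊆_lax O' ⊆_lax B` with `B'' ⊆_str B`, hence `B'' ⊆_str O'`.
Backward: interpolating a basis element below the given open poset with a Nachbin `B ∈ 𝔅` gives
an element of `𝔅` which is lax in the open poset and strict in `B`.
-/

namespace OSet

variable {X : Type u} {A B C : OSet X}

lemma laxSub.trans (hAB : A.laxSub B) (hBC : B.laxSub C) : A.laxSub C :=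
  ⟨hAB.1.trans hBC.1, fun p q h => hBC.2 p q (hAB.2 p q h)⟩

lemma IsPoset.laxSub_of_strSub (hA : A.IsPoset) (h : A.strSub B) : A.laxSub B :=
  ⟨h.1, fun p q hpq => (h.2 p (hA.1 p q hpq).1 q (hA.1 p q hpq).2).1 hpq⟩

lemma strSub.of_laxSub_of_laxSub (hAC : A.strSub C) (hAB : A.laxSub B) (hBC : B.laxSub C) :
    A.strSub B :=
  ⟨hAB.1, fun p hp q hq =>
    ⟨hAB.2 p q, fun hpq => (hAC.2 p hp q hq).2 (hBC.2 p q hpq)⟩⟩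

lemma IsNachbin.of_strSub [TopologicalSpace X] (h : A.strSub B) (hB : B.IsNachbin) :
    A.IsNachbin := by
  have hpre : {p : A.carrier × A.carrier | A.le p.1 p.2} =
      Prod.map (Set.inclusion h.1) (Set.inclusion h.1) ⁻¹'
        {p : B.carrier × B.carrier | B.le p.1 p.2} := by
    ext p
    exact h.2 p.1 p.1.2 p.2 p.2.2
  rw [IsNachbin, hpre]
  exact hB.preimage ((continuous_inclusion h.1).prodMap (continuous_inclusion h.1))

end OSet

namespace IsOrderedBasis

variable {X : Type u} [TopologicalSpace X] {𝔅 : Set (OSet X)}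

lemma exists_mem (h : IsOrderedBasis 𝔅) (x : X) : ∃ B ∈ 𝔅, x ∈ B.carrier := by
  obtain ⟨_, ⟨B, hB, rfl⟩, hx, -⟩ :=
    h.isBasis.exists_subset_of_mem_open (Set.mem_univ x) isOpen_univ
  exact ⟨B, hB, hx⟩

lemma mem_openPosets (h : IsOrderedBasis 𝔅) {B : OSet X} (hB : B ∈ 𝔅) : B ∈ openPosets 𝔅 := by
  intro x hx
  obtain ⟨B'', hB'', hx'', hsub, hle⟩ := h.compat x B hB B hB hx hx
  exact ⟨B'', hB'', hx'', fun y hy => (hsub hy).1, fun p q hpq => (hle p q hpq).1⟩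

end IsOrderedBasis

lemma IsStrictOrderedBasis.exists_laxSub_strSub {X : Type u} [TopologicalSpace X]
    {𝔅 : Set (OSet X)} (h : IsStrictOrderedBasis 𝔅) {x : X} {B₁ B₂ : OSet X} (hB₁ : B₁ ∈ 𝔅)
    (hB₂ : B₂ ∈ 𝔅) (hx₁ : x ∈ B₁.carrier) (hx₂ : x ∈ B₂.carrier) :
    ∃ B ∈ 𝔅, x ∈ B.carrier ∧ B.laxSub B₁ ∧ B.strSub B₂ := by
  obtain ⟨B, hB, hx, hB₁, hB₂⟩ := h.2 x B₁ hB₁ B₂ hB₂ hx₁ hx₂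
  exact ⟨B, hB, hx, (h.1.isPoset B hB).laxSub_of_strSub hB₁, hB₂⟩

/-- A strictly locally ordered space, given by a strict ordered
basis `𝔅`, is locally Nachbin if, and only if, every point belongs to some
`B ∈ 𝔅` which is a Nachbin ordered space (with the topology inherited from
`X`). -/
theorem stmt2 {X : Type u} [TopologicalSpace X] (𝔅 : Set (OSet X))
    (h𝔅 : IsStrictOrderedBasis 𝔅) :
    IsLocallyNachbin 𝔅 ↔ ∀ x : X, ∃ B ∈ 𝔅, x ∈ B.carrier ∧ B.IsNachbin := by
  constructor
  · intro hLN x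
    obtain ⟨B, hB, hxB⟩ := h𝔅.1.exists_mem x
    obtain ⟨O', hO', hxO', hO'B, hO'N⟩ := hLN x B (h𝔅.1.mem_openPosets hB) hxB
    obtain ⟨B₀, hB₀, hxB₀, hB₀O'⟩ := hO' x hxO'
    obtain ⟨B'', hB'', hxB'', hB''B₀, hB''B⟩ :=
      h𝔅.exists_laxSub_strSub hB₀ hB hxB₀ hxB
    have hB''O' : B''.strSub O' := hB''B.of_laxSub_of_laxSub (hB''B₀.trans hB₀O') hO'B
    exact ⟨B'', hB'', hxB'', hO'N.of_strSub hB''O'⟩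
  · intro hAll x O hO hxO
    obtain ⟨B, hB, hxB, hBN⟩ := hAll x
    obtain ⟨B₁, hB₁, hxB₁, hB₁O⟩ := hO x hxO
    obtain ⟨B'', hB'', hxB'', hB''B₁, hB''B⟩ := h𝔅.exists_laxSub_strSub hB₁ hB hxB₁ hxB
    exact ⟨B'', h𝔅.1.mem_openPosets hB'', hxB'', hB''B₁.trans hB₁O, hBN.of_strSub hB''B⟩
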